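/- In a well-formed reversing Petri net, forward execution of a transition preserves tokens: if in state ⟨M,H⟩ every base a occurs in exactly one place, and ⟨M,H⟩ →t ⟨M',H'⟩ by forward firing, then in M' every base a still occurs in exactly one place. -/

import Mathlib

namespace RPNF

/-- Elements occupying places: tokens (bases) or bonds. -/
abbrev Elem (α : Type) := α ⊕ (α × α)

/-- A marking assigns to each place a set of tokens and bonds. -/
abbrev Marking (α P : Type) := P → Set (Elem α)

/-- A history assigns to each transition the set of keys of executed, non-reversed firings. -/
abbrev Hist (T : Type) := T → Set ℕ

/-- A reversing Petri net: arcs carry required tokens/bonds (`FIn`), forbidden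
tokens/bonds (`FInNeg`) on incoming arcs, and produced tokens/bonds (`FOut`). -/
structure RPN (A P T : Type) where
  FIn : P → T → Set (Elem A)
  FInNeg : P → T → Set (Elem A)
  FOut : T → P → Set (Elem A)

variable {A P T : Type}

def RPN.guard (N : RPN A P T) (t : T) : Set (Elem A) := ⋃ x, N.FIn x t

def RPN.effects (N : RPN A P T) (t : T) : Set (Elem A) := ⋃ x, N.FOut t x

def RPN.effect (N : RPN A P T) (t : T) : Set (Elem A) := N.effects t \ N.guard t

def tokens {α : Type} (S : Set (Elem α)) : Set α := {a | Sum.inl a ∈ S}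

/-- Well-formedness of a reversing Petri net. -/
structure WellFormed (N : RPN A P T) : Prop where
  tok_pres : ∀ t, tokens (N.guard t) = tokens (N.effects t)
  bond_pres : ∀ t (β : A × A), Sum.inr β ∈ N.guard t → Sum.inr β ∈ N.effects t
  no_clone : ∀ t x y, x ≠ y → N.FOut t x ∩ N.FOut t y = ∅

/-- Connectivity of tokens via (undirected) bonds in a set of elements. -/
inductive Reach {α : Type} (C : Set (Elem α)) : α → α → Prop
  | refl (a : α) : Reach C a a
  | fwd {a b c : α} : Reach C a b → Sum.inr (b, c) ∈ C → Reach C a c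
  | bwd {a b c : α} : Reach C a b → Sum.inr (c, b) ∈ C → Reach C a c

def touches {α : Type} (C : Set (Elem α)) (a : α) : Elem α → Prop
  | Sum.inl b => Reach C a b
  | Sum.inr (b, c) => Reach C a b ∧ Reach C a c

/-- The connected component of token `a` in the set `C` of tokens and bonds. -/
def con {α : Type} (C : Set (Elem α)) (a : α) : Set (Elem α) :=
  {e | e ∈ C ∧ touches C a e}

/-- Forward enabledness of a transition. -/
structure FwdEnabled (N : RPN A P T) (M : Marking A P) (t : T) : Prop where
  pos : ∀ x e, e ∈ N.FIn x t → e ∈ M x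
  neg : ∀ x e, e ∈ N.FInNeg x t → e ∉ M x
  fork : ∀ y₁ y₂ (a b : A), y₁ ≠ y₂ → Sum.inl a ∈ N.FOut t y₁ → Sum.inl b ∈ N.FOut t y₂ →
    ∀ x, Sum.inl b ∉ con (M x) a
  preBond : ∀ (β : A × A) x y, Sum.inr β ∈ N.FOut t x → Sum.inr β ∈ M y → Sum.inr β ∈ N.FIn y t

/-- Marking resulting from a forward firing of `t`: connected components of the tokens
on the incoming arcs are relocated to the output places, bonds in `effect t` are created. -/
def fwdMark (N : RPN A P T) (M : Marking A P) (t : T) : Marking A P :=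
  fun x =>
    ((M x \ {e | ∃ a ∈ tokens (N.FIn x t), e ∈ con (M x) a})
      ∪ N.FOut t x)
      ∪ {e | ∃ y, ∃ a ∈ tokens (N.FOut t x) ∩ tokens (N.FIn y t), e ∈ con (M y) a}

/-- Forward firing ⟨M,H⟩ →t ⟨M',H'⟩ with fresh (maximal) key `k`. -/
structure FwdStep (N : RPN A P T) (M : Marking A P) (H : Hist T) (t : T) (k : ℕ)
    (M' : Marking A P) (H' : Hist T) : Prop where
  enabled : FwdEnabled N M t
  fresh : ∀ t' k', k' ∈ H t' → k' < k
  mark : M' = fwdMark N M t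
  histT : H' t = insert k (H t)
  histO : ∀ t', t' ≠ t → H' t' = H t'

/-- `t` is bt-enabled: it holds the globally maximal key `k`. -/
def BtEnabled (H : Hist T) (t : T) (k : ℕ) : Prop :=
  k ∈ H t ∧ ∀ t' k', k' ∈ H t' → k' ≤ k

/-- Marking resulting from undoing `t`: components on the outgoing arcs are moved
back to the input places and the bonds in `effect t` are destroyed. -/
def bwdMark (N : RPN A P T) (M : Marking A P) (t : T) : Marking A P :=
  fun x =>
    (M x \ {e | ∃ a ∈ tokens (N.FOut t x), e ∈ con (M x) a})
      ∪ {e | ∃ y, ∃ a ∈ tokens (N.FIn x t) ∩ tokens (N.FOut t y), e ∈ con (M y \ N.effect t) a}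

/-- Backtracking step ⟨M,H⟩ ⇝t ⟨M',H'⟩ removing the maximal key `k`. -/
structure BwdStep (N : RPN A P T) (M : Marking A P) (H : Hist T) (t : T) (k : ℕ)
    (M' : Marking A P) (H' : Hist T) : Prop where
  enabled : BtEnabled H t k
  mark : M' = bwdMark N M t
  histT : H' t = H t \ {k}
  histO : ∀ t', t' ≠ t → H' t' = H t'

/-- Transition occurrences. -/
abbrev Occ (T : Type) := T × ℕ

abbrev Prec (T : Type) := Occ T → Occ T → Prop

/-- A state of a reversing Petri net augmented with the causal-dependence relation. -/
structure CState (A P T : Type) where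
  M : Marking A P
  H : Hist T
  prec : Prec T

/-- The firing of `t` consumes a connected component containing tokens produced by `t'`. -/
def CausDep (N : RPN A P T) (M : Marking A P) (t t' : T) : Prop :=
  ∃ x, ∃ a : A, Sum.inl a ∈ N.FIn x t ∧ (con (M x) a ∩ N.effects t').Nonempty

/-- Forward firing on causal states: the causal-dependence relation is extended. -/
structure CFwdStep (N : RPN A P T) (s : CState A P T) (t : T) (k : ℕ)
    (s' : CState A P T) : Prop where
  step : FwdStep N s.M s.H t k s'.M s'.H
  prec : ∀ o o' : Occ T, s'.prec o o' ↔
    (s.prec o o' ∨ (o' = (t, k) ∧ o.2 ∈ s.H o.1 ∧ o.2 < k ∧ CausDep N s.M t o.1))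

/-- `t` (with maximal key `k` of `H t`) is c-enabled: its out-tokens/bonds are available
and no occurrence causally depends on its maximal occurrence. -/
structure CEnabled (N : RPN A P T) (s : CState A P T) (t : T) (k : ℕ) : Prop where
  outAvail : ∀ x e, e ∈ N.FOut t x → e ∈ s.M x
  keyMem : k ∈ s.H t
  keyMax : ∀ k', k' ∈ s.H t → k' ≤ k
  noDep : ∀ t' k', k' ∈ s.H t' → ¬ s.prec (t, k) (t', k')

/-- Causal-order reversal ⟨M,H,≺⟩ ⇝t ⟨M',H',≺'⟩. -/
structure CRevStep (N : RPN A P T) (s : CState A P T) (t : T) (k : ℕ)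
    (s' : CState A P T) : Prop where
  enabled : CEnabled N s t k
  mark : s'.M = bwdMark N s.M t
  histT : s'.H t = s.H t \ {k}
  histO : ∀ t', t' ≠ t → s'.H t' = s.H t'
  prec : ∀ o o' : Occ T, s'.prec o o' ↔ (s.prec o o' ∧ o'.2 ≠ k)

/-- Causal paths: chains of transition occurrences under the causal-dependence relation. -/
def IsCausalPath (H : Hist T) (pr : Prec T) (l : List (Occ T)) : Prop :=
  l.Chain' pr ∧ ∀ o ∈ l, o.2 ∈ H o.1

/-- Histories are causally equivalent when they contain the same causal paths
(compared by the sequences of transition names). -/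
def HistEquiv (H₁ : Hist T) (pr₁ : Prec T) (H₂ : Hist T) (pr₂ : Prec T) : Prop :=
  (∀ l, IsCausalPath H₁ pr₁ l →
      ∃ l', IsCausalPath H₂ pr₂ l' ∧ l.map Prod.fst = l'.map Prod.fst) ∧
  (∀ l, IsCausalPath H₂ pr₂ l →
      ∃ l', IsCausalPath H₁ pr₁ l' ∧ l.map Prod.fst = l'.map Prod.fst)

/-- Causally equivalent states: equal markings and causally equivalent histories. -/
def SEquiv (s₁ s₂ : CState A P T) : Prop :=
  s₁.M = s₂.M ∧ HistEquiv s₁.H s₁.prec s₂.H s₂.prec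

/-- Actions: forward execution or reversal of a transition. -/
inductive CAct (T : Type) where
  | fwd (t : T)
  | rev (t : T)

def CAct.inv {T : Type} : CAct T → CAct T
  | .fwd t => .rev t
  | .rev t => .fwd t

/-- Combined transition relation: forward firing or causal-order reversal. -/
def CStep (N : RPN A P T) (s : CState A P T) (a : CAct T) (s' : CState A P T) : Prop :=
  match a with
  | .fwd t => ∃ k, CFwdStep N s t k s'
  | .rev t => ∃ k, CRevStep N s t k s'

section Generic
variable {S Ac : Type}

/-- Execution of a trace of actions. -/
inductive TraceExec (step : S → Ac → S → Prop) : S → List Ac → S → Prop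
  | nil (s : S) : TraceExec step s [] s
  | cons {s s' s'' : S} {a : Ac} {σ : List Ac} :
      step s a s' → TraceExec step s' σ s'' → TraceExec step s (a :: σ) s''

/-- Two actions are concurrent in a state if each can still be executed after the
other and the two execution orders lead to equivalent states. -/
def Concurrent (step : S → Ac → S → Prop) (eqv : S → S → Prop) (s : S) (a₁ a₂ : Ac) : Prop :=
  ∀ s₁ s₂, step s a₁ s₁ → step s a₂ s₂ →
    (∃ s₁', step s₁ a₂ s₁') ∧ (∃ s₂', step s₂ a₁ s₂') ∧
    (∀ s₁' s₂', step s₁ a₂ s₁' → step s₂ a₁ s₂' → eqv s₁' s₂')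

/-- Causal equivalence on traces: the least equivalence closed under composition
allowing swaps of concurrent actions and cancellation of `cancel`-related pairs. -/
inductive TEquiv (step : S → Ac → S → Prop) (eqv : S → S → Prop)
    (cancel : Ac → Ac → S → S → Prop) : S → List Ac → List Ac → Prop
  | refl (s : S) (σ : List Ac) : TEquiv step eqv cancel s σ σ
  | symm {s : S} {σ₁ σ₂ : List Ac} :
      TEquiv step eqv cancel s σ₁ σ₂ → TEquiv step eqv cancel s σ₂ σ₁
  | trans {s : S} {σ₁ σ₂ σ₃ : List Ac} :
      TEquiv step eqv cancel s σ₁ σ₂ → TEquiv step eqv cancel s σ₂ σ₃ →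
      TEquiv step eqv cancel s σ₁ σ₃
  | swap {s s' : S} {σ₀ σ : List Ac} {a₁ a₂ : Ac} :
      TraceExec step s σ₀ s' → Concurrent step eqv s' a₁ a₂ →
      TEquiv step eqv cancel s (σ₀ ++ a₁ :: a₂ :: σ) (σ₀ ++ a₂ :: a₁ :: σ)
  | cancelStep {s s' s₁ s₂ : S} {σ₀ σ : List Ac} {a₁ a₂ : Ac} :
      TraceExec step s σ₀ s' → step s' a₁ s₁ → step s₁ a₂ s₂ → cancel a₁ a₂ s' s₂ →
      TEquiv step eqv cancel s (σ₀ ++ a₁ :: a₂ :: σ) (σ₀ ++ σ)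

end Generic

/-- Cancellation for reversing Petri nets: an action followed by its inverse. -/
def invCancel {S T : Type} : CAct T → CAct T → S → S → Prop :=
  fun a₁ a₂ _ _ => a₂ = CAct.inv a₁

/-- `last_T(C,H) = t`: `t` is the non-reversed transition with maximal key among
those whose effects intersect the component `C`. -/
def IsLastT (N : RPN A P T) (H : Hist T) (C : Set (Elem A)) (t : T) : Prop :=
  ∃ k ∈ H t, (N.effects t ∩ C).Nonempty ∧
    ∀ t' k', k' ∈ H t' → (N.effects t' ∩ C).Nonempty → k' ≤ k

/-- `last_P(C,H) = x`: the unique output place of `last_T(C,H)` intersecting `C`, or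
the place of `C` in the initial marking `M₀` if no such transition exists. -/
def IsLastP (N : RPN A P T) (M₀ : Marking A P) (H : Hist T) (C : Set (Elem A)) (x : P) : Prop :=
  (∃ t, IsLastT N H C t ∧ (N.FOut t x ∩ C).Nonempty ∧ ∀ y, (N.FOut t y ∩ C).Nonempty → y = x) ∨
  ((∀ t, ¬ IsLastT N H C t) ∧ C ⊆ M₀ x)

/-- Marking after out-of-causal-order reversal of `t`: the bonds in `effect t` are
destroyed and each resulting connected component is relocated to its `last_P` place. -/
def ocoMark (N : RPN A P T) (M₀ M : Marking A P) (H' : Hist T) (t : T) : Marking A P :=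
  fun x =>
    (M x ∪ {e | ∃ y, ∃ a : A, Sum.inl a ∈ M y ∧ Sum.inl a ∈ N.effects t ∧
        IsLastP N M₀ H' (con (M y \ N.effect t) a) x ∧ e ∈ con (M y \ N.effect t) a}) \
    (N.effect t ∪ {e | ∃ a : A, Sum.inl a ∈ M x ∧ Sum.inl a ∈ N.effects t ∧
        ¬ IsLastP N M₀ H' (con (M x \ N.effect t) a) x ∧ e ∈ con (M x \ N.effect t) a})

/-- Out-of-causal-order reversal ⟨M,H⟩ ⇝t ⟨M',H'⟩ (t is o-enabled: `H t ≠ ∅`,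
and its maximal key `k` is removed). -/
structure OStep (N : RPN A P T) (M₀ : Marking A P) (M : Marking A P) (H : Hist T) (t : T)
    (k : ℕ) (M' : Marking A P) (H' : Hist T) : Prop where
  keyMem : k ∈ H t
  keyMax : ∀ k', k' ∈ H t → k' ≤ k
  histT : H' t = H t \ {k}
  histO : ∀ t', t' ≠ t → H' t' = H t'
  mark : M' = ocoMark N M₀ M H' t

/-- Combined forward / out-of-causal-order step on plain states. -/
def OPStep (N : RPN A P T) (M₀ : Marking A P) (s : Marking A P × Hist T) (a : CAct T)
    (s' : Marking A P × Hist T) : Prop :=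
  match a with
  | .fwd t => ∃ k, FwdStep N s.1 s.2 t k s'.1 s'.2
  | .rev t => ∃ k, OStep N M₀ s.1 s.2 t k s'.1 s'.2

/-- Out-of-causal-order reversal on causal states. -/
def OCStep (N : RPN A P T) (M₀ : Marking A P) (s : CState A P T) (t : T) (k : ℕ)
    (s' : CState A P T) : Prop :=
  OStep N M₀ s.M s.H t k s'.M s'.H ∧ ∀ o o' : Occ T, s'.prec o o' ↔ (s.prec o o' ∧ o'.2 ≠ k)

/-- Combined forward / out-of-causal-order step on causal states. -/
def OAStep (N : RPN A P T) (M₀ : Marking A P) (s : CState A P T) (a : CAct T)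
    (s' : CState A P T) : Prop :=
  match a with
  | .fwd t => ∃ k, CFwdStep N s t k s'
  | .rev t => ∃ k, OCStep N M₀ s t k s'

/-- Backtracking on causal states. -/
def BwdStepC (N : RPN A P T) (s : CState A P T) (t : T) (k : ℕ) (s' : CState A P T) : Prop :=
  BwdStep N s.M s.H t k s'.M s'.H ∧ ∀ o o' : Occ T, s'.prec o o' ↔ (s.prec o o' ∧ o'.2 ≠ k)

/-!
A base `a` at place `x₀` either lies in the connected component of some token `b` on an incoming
arc from `x₀`, or it does not. In the first case `a` travels with that component to the output
place of `b`, which exists because well-formedness makes every token of the guard reappear in the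
effects; it reaches no other place, since forward enabledness forbids two tokens of one component
to leave along different outgoing arcs. In the second case `a` stays at `x₀` and is not produced
anywhere else: a token on an outgoing arc is, again by well-formedness, on an incoming arc, hence
would have been consumed together with its own component.
-/

theorem Reach.trans {α : Type} {C : Set (Elem α)} {a b c : α}
    (hab : Reach C a b) (hbc : Reach C b c) : Reach C a c := by
  induction hbc with
  | refl => exact hab
  | fwd _ hbond ih => exact ih.fwd hbond
  | bwd _ hbond ih => exact ih.bwd hbond

theorem Reach.symm {α : Type} {C : Set (Elem α)} {a b : α} (h : Reach C a b) : Reach C b a := by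
  induction h with
  | refl => exact .refl _
  | fwd _ hbond ih => exact ((Reach.refl _).bwd hbond).trans ih
  | bwd _ hbond ih => exact ((Reach.refl _).fwd hbond).trans ih

theorem inl_mem_fwdMark {N : RPN A P T} {M : Marking A P} {t : T} {x : P} {a : A} :
    Sum.inl a ∈ fwdMark N M t x ↔
      (Sum.inl a ∈ M x ∧ ¬ ∃ b, Sum.inl b ∈ N.FIn x t ∧ Reach (M x) b a) ∨
      Sum.inl a ∈ N.FOut t x ∨
      ∃ y b, Sum.inl b ∈ N.FOut t x ∧ Sum.inl b ∈ N.FIn y t ∧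
        Sum.inl a ∈ M y ∧ Reach (M y) b a := by
  simp only [fwdMark, con, touches, tokens, Set.mem_union, Set.mem_sdiff, Set.mem_ofPred_eq,
    Set.mem_inter_iff]
  grind

namespace WellFormed

variable {N : RPN A P T}

theorem exists_fOut_of_fIn (hwf : WellFormed N) {t : T} {x : P} {a : A}
    (ha : Sum.inl a ∈ N.FIn x t) : ∃ y, Sum.inl a ∈ N.FOut t y := by
  have : a ∈ tokens (N.effects t) := hwf.tok_pres t ▸ Set.mem_iUnion.2 ⟨x, ha⟩
  exact Set.mem_iUnion.1 this

theorem exists_fIn_of_fOut (hwf : WellFormed N) {t : T} {y : P} {a : A}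
    (ha : Sum.inl a ∈ N.FOut t y) : ∃ x, Sum.inl a ∈ N.FIn x t := by
  have : a ∈ tokens (N.guard t) := (hwf.tok_pres t).symm ▸ Set.mem_iUnion.2 ⟨y, ha⟩
  exact Set.mem_iUnion.1 this

end WellFormed

namespace FwdEnabled

variable {N : RPN A P T} {M : Marking A P} {t : T}

theorem eq_of_reach (hen : FwdEnabled N M t) {x y z : P} {b c : A}
    (hb : Sum.inl b ∈ N.FOut t y) (hc : Sum.inl c ∈ N.FOut t z)
    (hcM : Sum.inl c ∈ M x) (hbc : Reach (M x) b c) : z = y := by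
  by_contra hne
  exact hen.fork y z b c (Ne.symm hne) hb hc x ⟨hcM, hbc⟩

variable {a : A} {x₀ : P}

theorem inl_mem_fwdMark_iff_of_reach (hen : FwdEnabled N M t)
    (hx₀ : ∀ x, Sum.inl a ∈ M x → x = x₀) (ha : Sum.inl a ∈ M x₀) {b : A} {y : P}
    (hbIn : Sum.inl b ∈ N.FIn x₀ t) (hba : Reach (M x₀) b a) (hbOut : Sum.inl b ∈ N.FOut t y)
    (z : P) : Sum.inl a ∈ fwdMark N M t z ↔ z = y := by
  refine ⟨fun h => ?_, fun hz =>
    hz ▸ inl_mem_fwdMark.2 (.inr (.inr ⟨x₀, b, hbOut, hbIn, ha, hba⟩))⟩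
  rcases inl_mem_fwdMark.1 h with ⟨haz, hstay⟩ | haOut | ⟨y', c, hcOut, hcIn, haM, hca⟩
  · obtain rfl := hx₀ z haz
    exact absurd ⟨b, hbIn, hba⟩ hstay
  · exact hen.eq_of_reach hbOut haOut ha hba
  · obtain rfl := hx₀ y' haM
    exact hen.eq_of_reach hbOut hcOut (hen.pos _ _ hcIn) (hba.trans hca.symm)

theorem inl_mem_fwdMark_iff_of_not_reach (hwf : WellFormed N) (hen : FwdEnabled N M t)
    (hx₀ : ∀ x, Sum.inl a ∈ M x → x = x₀) (ha : Sum.inl a ∈ M x₀)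
    (hstay : ¬ ∃ b, Sum.inl b ∈ N.FIn x₀ t ∧ Reach (M x₀) b a)
    (z : P) : Sum.inl a ∈ fwdMark N M t z ↔ z = x₀ := by
  refine ⟨fun h => ?_, fun hz => hz ▸ inl_mem_fwdMark.2 (.inl ⟨ha, hstay⟩)⟩
  rcases inl_mem_fwdMark.1 h with ⟨haz, -⟩ | haOut | ⟨y, c, -, hcIn, haM, hca⟩
  · exact hx₀ z haz
  · obtain ⟨w, haIn⟩ := hwf.exists_fIn_of_fOut haOut
    obtain rfl := hx₀ w (hen.pos _ _ haIn)
    exact absurd ⟨a, haIn, .refl a⟩ hstay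
  · obtain rfl := hx₀ y haM
    exact absurd ⟨c, hcIn, hca⟩ hstay

theorem existsUnique_inl_mem_fwdMark (hwf : WellFormed N) (hen : FwdEnabled N M t)
    (huniq : ∃! x, Sum.inl a ∈ M x) : ∃! x, Sum.inl a ∈ fwdMark N M t x := by
  obtain ⟨x₀, ha, hx₀⟩ := huniq
  by_cases hmove : ∃ b, Sum.inl b ∈ N.FIn x₀ t ∧ Reach (M x₀) b a
  · obtain ⟨b, hbIn, hba⟩ := hmove
    obtain ⟨y, hbOut⟩ := hwf.exists_fOut_of_fIn hbIn
    exact (existsUnique_congr (hen.inl_mem_fwdMark_iff_of_reach hx₀ ha hbIn hba hbOut)).2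
      existsUnique_eq
  · exact (existsUnique_congr (hen.inl_mem_fwdMark_iff_of_not_reach hwf hx₀ ha hmove)).2
      existsUnique_eq

end FwdEnabled

/-- In a well-formed reversing Petri net, forward execution of a transition
preserves tokens: if in state ⟨M,H⟩ every base `a` occurs in exactly one place, and
⟨M,H⟩ →t ⟨M',H'⟩ by forward firing, then in `M'` every base still occurs in exactly one place. -/
theorem token_preservation_forward {A P T : Type} (N : RPN A P T) (hwf : WellFormed N)
    (M M' : Marking A P) (H H' : Hist T) (t : T)
    (huniq : ∀ a : A, ∃! x : P, Sum.inl a ∈ M x)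
    (hstep : ∃ k, FwdStep N M H t k M' H') :
    ∀ a : A, ∃! x : P, Sum.inl a ∈ M' x := by
  obtain ⟨k, hstep⟩ := hstep
  rw [hstep.mark]
  exact fun a => hstep.enabled.existsUnique_inl_mem_fwdMark hwf (huniq a)

end RPNF
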